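/- Deviation of the geometric median forces many deviating points: Let H be a real Hilbert space, θ_1, …, θ_k ∈ H, θ* ∈ H, ε ≥ 0, α ∈ (0, 1/2), and 0 ≤ γ < α. Let J ⊆ {1, …, k} with |J| ≥ (1 − γ)·k. If some geometric median θ̃ of θ_1, …, θ_k satisfies ‖θ̃ − θ*‖ > C_α · ε, then at least (α − γ)·k of the indices j ∈ J satisfy ‖θ_j − θ*‖ > ε. -/

import Mathlib

open scoped BigOperators

/-- A point `m` is a geometric median of the points `θ 1, …, θ k` if it minimizes
`y ↦ ∑ j, ‖y - θ j‖`. -/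
def IsGeomMedian {H : Type*} [NormedAddCommGroup H] {k : ℕ} (θ : Fin k → H) (m : H) : Prop :=
  ∀ y : H, ∑ j, ‖m - θ j‖ ≤ ∑ j, ‖y - θ j‖

/-- The constant `C_α = (1 - α) √(1/(1 - 2α))`. -/
noncomputable def Cconst (α : ℝ) : ℝ := (1 - α) * Real.sqrt (1 / (1 - 2 * α))

/-! Write `r = ‖θ̃ - θ*‖`. Since `θ̃` minimizes `y ↦ ∑ j, ‖y - θ j‖`, the one-sided derivative of
this sum at `θ̃` in the direction `θ* - θ̃` is nonnegative. Seen from `θ̃`, the ball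
`‖x - θ*‖ ≤ ε` lies in a cone of half-angle `arcsin (ε / r)` around that direction, so each of the
`n` points `θ j` in the ball contributes at most `-√(r² - ε²)` to the derivative, and any other
point at most `r`. Hence `n √(r² - ε²) ≤ r (k - n)`, and `r > C_α ε` is exactly what turns this
into `n ≤ (1 - α) k`; at most that many indices of `J` are not deviating. -/

open scoped RealInnerProductSpace

theorem IsMinOn.hasDerivWithinAt_Ici_nonneg {f : ℝ → ℝ} {a f' : ℝ} (h : IsMinOn f (Set.Ici a) a)
    (hf : HasDerivWithinAt f f' (Set.Ici a) a) : 0 ≤ f' := by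
  have h1 : (1 : ℝ) ∈ posTangentConeAt (Set.Ici a) a :=
    mem_posTangentConeAt_of_segment_subset (by simp [segment_eq_Icc, Set.Icc_subset_Ici_self])
  simpa using h.localize.hasFDerivWithinAt_nonneg hf h1

theorem sq_Cconst {α : ℝ} (hα : α < 1 / 2) : Cconst α ^ 2 = (1 - α) ^ 2 / (1 - 2 * α) := by
  rw [Cconst, mul_pow, Real.sq_sqrt (by rw [one_div_nonneg]; linarith)]
  ring

theorem Cconst_nonneg {α : ℝ} (hα : α ≤ 1) : 0 ≤ Cconst α :=
  mul_nonneg (by linarith) (Real.sqrt_nonneg _)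

theorem one_le_Cconst {α : ℝ} (hα : α < 1 / 2) : 1 ≤ Cconst α := by
  have h : 1 ≤ Cconst α ^ 2 := by
    rw [sq_Cconst hα, one_le_div (by linarith)]
    nlinarith [sq_nonneg α]
  nlinarith [Cconst_nonneg (α := α) (by linarith)]

theorem mul_le_sub_mul_sqrt_of_Cconst_mul_lt {α ε r : ℝ} (hα0 : 0 ≤ α) (hα : α < 1 / 2)
    (hε : 0 ≤ ε) (h : Cconst α * ε < r) : α * r ≤ (1 - α) * √(r ^ 2 - ε ^ 2) := by
  have hCε : 0 ≤ Cconst α * ε := mul_nonneg (Cconst_nonneg (by linarith)) hε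
  have hsq : (1 - α) ^ 2 / (1 - 2 * α) * ε ^ 2 < r ^ 2 := by
    rw [← sq_Cconst hα, ← mul_pow]
    exact pow_lt_pow_left₀ h hCε two_ne_zero
  rw [div_mul_eq_mul_div, div_lt_iff₀ (by linarith)] at hsq
  have hr : 0 ≤ r := hCε.trans h.le
  have hεr : 0 ≤ r ^ 2 - ε ^ 2 := by nlinarith [sq_nonneg (α * ε)]
  rw [← Real.sqrt_sq (show 0 ≤ 1 - α by linarith), ← Real.sqrt_mul' _ hεr,
    Real.le_sqrt (by positivity) (by positivity)]
  nlinarith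

section InnerProductSpace

variable {H : Type*} [NormedAddCommGroup H] [InnerProductSpace ℝ H]

open Classical in
noncomputable def normDirDeriv (x v : H) : ℝ := if x = 0 then ‖v‖ else ⟪x, v⟫ / ‖x‖

theorem hasDerivWithinAt_norm_add_smul (x v : H) :
    HasDerivWithinAt (fun t : ℝ => ‖x + t • v‖) (normDirDeriv x v) (Set.Ici 0) 0 := by
  by_cases hx : x = 0
  · subst hx
    have hlin : HasDerivWithinAt (fun t : ℝ => t * ‖v‖) ‖v‖ (Set.Ici 0) 0 := by
      simpa using (hasDerivWithinAt_id (0 : ℝ) (Set.Ici 0)).mul_const ‖v‖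
    refine hlin.congr (fun t ht => ?_) (by simp) |>.congr_deriv (by simp [normDirDeriv])
    rw [zero_add, norm_smul, Real.norm_of_nonneg ht]
  · have hsq : HasDerivAt (fun t : ℝ => ‖x + t • v‖ ^ 2) (2 * ⟪x, v⟫) 0 := by
      simpa using (((hasDerivAt_id (0 : ℝ)).smul_const v).const_add x).norm_sq
    have hroot := (hsq.sqrt (by simpa using hx)).hasDerivWithinAt (s := Set.Ici 0)
    simp only [Real.sqrt_sq (norm_nonneg _), zero_smul, add_zero] at hroot
    refine hroot.congr_deriv ?_
    rw [normDirDeriv, if_neg hx, mul_div_mul_left _ _ two_ne_zero]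

theorem normDirDeriv_le_norm (x v : H) : normDirDeriv x v ≤ ‖v‖ := by
  unfold normDirDeriv
  split_ifs with hx
  · exact le_rfl
  · rw [div_le_iff₀ (norm_pos_iff.mpr hx), mul_comm]
    exact real_inner_le_norm x v

theorem IsGeomMedian.sum_normDirDeriv_nonneg {k : ℕ} {θ : Fin k → H} {m : H}
    (hm : IsGeomMedian θ m) (v : H) : 0 ≤ ∑ j, normDirDeriv (m - θ j) v := by
  refine IsMinOn.hasDerivWithinAt_Ici_nonneg (f := fun t : ℝ => ∑ j, ‖m - θ j + t • v‖)
    (fun t _ => ?_) (HasDerivWithinAt.fun_sum fun j _ => hasDerivWithinAt_norm_add_smul _ _)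
  simpa [sub_add_eq_add_sub] using hm (m + t • v)

theorem sqrt_norm_sq_sub_norm_sq_mul_norm_add_le_inner {a b : H} (h : ‖a‖ ≤ ‖b‖) :
    √(‖b‖ ^ 2 - ‖a‖ ^ 2) * ‖a + b‖ ≤ ⟪a + b, b⟫ := by
  have hinner : ⟪a + b, b⟫ = ⟪a, b⟫ + ‖b‖ ^ 2 := by
    rw [inner_add_left, real_inner_self_eq_norm_sq]
  have hnonneg : 0 ≤ ⟪a + b, b⟫ := by
    nlinarith [neg_le_of_abs_le (abs_real_inner_le_norm a b),
      mul_le_mul_of_nonneg_right h (norm_nonneg b)]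
  rw [← Real.sqrt_sq (norm_nonneg (a + b)), ← Real.sqrt_mul' _ (by positivity),
    Real.sqrt_le_left hnonneg, hinner, norm_add_sq_real]
  -- the difference of the two sides is `(⟪a, b⟫ + ‖a‖²)²`
  nlinarith [sq_nonneg (⟪a, b⟫ + ‖a‖ ^ 2)]

theorem normDirDeriv_sub_le_neg_sqrt {x m p : H} {ε : ℝ} (hx : ‖x - p‖ ≤ ε)
    (hε : ε < ‖m - p‖) : normDirDeriv (m - x) (p - m) ≤ -√(‖m - p‖ ^ 2 - ε ^ 2) := by
  have hxm : m - x ≠ 0 := by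
    intro h
    rw [sub_eq_zero.mp h] at hε
    linarith
  have hangle := sqrt_norm_sq_sub_norm_sq_mul_norm_add_le_inner (a := x - p) (b := p - m)
    (by rw [norm_sub_rev p]; linarith)
  rw [sub_add_sub_cancel, norm_sub_rev p] at hangle
  have hsqrt : √(‖m - p‖ ^ 2 - ε ^ 2) ≤ √(‖m - p‖ ^ 2 - ‖x - p‖ ^ 2) :=
    Real.sqrt_le_sqrt (by gcongr)
  rw [normDirDeriv, if_neg hxm, div_le_iff₀ (norm_pos_iff.mpr hxm), ← neg_sub x m,
    inner_neg_left, norm_neg, neg_mul, neg_le_neg_iff]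
  exact (mul_le_mul_of_nonneg_right hsqrt (norm_nonneg _)).trans hangle

theorem IsGeomMedian.card_filter_norm_sub_le_mul_sqrt_le {k : ℕ} {θ : Fin k → H} {m p : H}
    {ε : ℝ} (hm : IsGeomMedian θ m) (hε : ε < ‖m - p‖) :
    ((Finset.univ.filter fun j => ‖θ j - p‖ ≤ ε).card : ℝ) * √(‖m - p‖ ^ 2 - ε ^ 2)
      ≤ ‖m - p‖ * (k - (Finset.univ.filter fun j => ‖θ j - p‖ ≤ ε).card) := by
  have hbound : ∀ j, normDirDeriv (m - θ j) (p - m)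
      ≤ if ‖θ j - p‖ ≤ ε then -√(‖m - p‖ ^ 2 - ε ^ 2) else ‖m - p‖ := by
    intro j
    split_ifs with hj
    · exact normDirDeriv_sub_le_neg_sqrt hj hε
    · simpa only [norm_sub_rev p] using normDirDeriv_le_norm (m - θ j) (p - m)
  have hsum := (hm.sum_normDirDeriv_nonneg (p - m)).trans
    (Finset.sum_le_sum fun j _ => hbound j)
  rw [Finset.sum_ite, Finset.sum_const, Finset.sum_const, nsmul_eq_mul, nsmul_eq_mul] at hsum
  have hcard : ((Finset.univ.filter fun j : Fin k => ¬‖θ j - p‖ ≤ ε).card : ℝ)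
      = k - (Finset.univ.filter fun j => ‖θ j - p‖ ≤ ε).card := by
    rw [eq_sub_iff_add_eq', ← Nat.cast_add, Finset.card_filter_add_card_filter_not,
      Finset.card_univ, Fintype.card_fin]
  rw [hcard] at hsum
  linarith

end InnerProductSpace

theorem geomMedian_deviation_forces_many_deviations_general
    {H : Type*} [NormedAddCommGroup H] [InnerProductSpace ℝ H]
    {k : ℕ} (θ : Fin k → H) (θstar : H) (ε : ℝ) (hε : 0 ≤ ε)
    (α : ℝ) (hα : α ∈ Set.Ioo (0 : ℝ) (1 / 2))
    (γ : ℝ)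
    (J : Finset (Fin k)) (hJcard : (1 - γ) * k ≤ J.card)
    (θtilde : H) (hmed : IsGeomMedian θ θtilde)
    (hdev : Cconst α * ε < ‖θtilde - θstar‖) :
    (α - γ) * k ≤ ((J.filter fun j => ε < ‖θ j - θstar‖).card : ℝ) := by
  set r := ‖θtilde - θstar‖
  set F := Finset.univ.filter fun j => ‖θ j - θstar‖ ≤ ε
  have hεr : ε < r := (le_mul_of_one_le_left hε (one_le_Cconst hα.2)).trans_lt hdev
  have hangle := mul_le_sub_mul_sqrt_of_Cconst_mul_lt hα.1.le hα.2 hε hdev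
  have hnear : (F.card : ℝ) * √(r ^ 2 - ε ^ 2) ≤ r * (k - F.card) :=
    hmed.card_filter_norm_sub_le_mul_sqrt_le hεr
  have hF : (F.card : ℝ) ≤ (1 - α) * k := by
    refine le_of_mul_le_mul_left ?_ (hε.trans_lt hεr)
    nlinarith [mul_le_mul_of_nonneg_right hangle (Nat.cast_nonneg (α := ℝ) F.card),
      mul_le_mul_of_nonneg_left hnear (by linarith [hα.2] : (0 : ℝ) ≤ 1 - α)]
  have hJ : ((J.filter fun j => ε < ‖θ j - θstar‖).card : ℝ)
      + (J.filter fun j => ¬ε < ‖θ j - θstar‖).card = J.card := by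
    exact_mod_cast Finset.card_filter_add_card_filter_not _
  have hJF : ((J.filter fun j => ¬ε < ‖θ j - θstar‖).card : ℝ) ≤ F.card := by
    exact_mod_cast Finset.card_le_card fun j hj => by
      simpa [F] using not_lt.mp (Finset.mem_filter.mp hj).2
  linarith

/-- **Deviation of the geometric median forces many deviating points.** If a geometric median
of `θ 1, …, θ k` deviates from `θ*` by more than `C_α ε`, then, for any subset `J` of at least
`(1 - γ) k` indices, at least `(α - γ) k` of the indices `j ∈ J` satisfy `‖θ j - θ*‖ > ε`. -/
theorem geomMedian_deviation_forces_many_deviations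
    {H : Type*} [NormedAddCommGroup H] [InnerProductSpace ℝ H] [CompleteSpace H]
    {k : ℕ} (θ : Fin k → H) (θstar : H) (ε : ℝ) (hε : 0 ≤ ε)
    (α : ℝ) (hα : α ∈ Set.Ioo (0 : ℝ) (1 / 2))
    (γ : ℝ) (hγ0 : 0 ≤ γ) (hγα : γ < α)
    (J : Finset (Fin k)) (hJcard : (1 - γ) * k ≤ J.card)
    (θtilde : H) (hmed : IsGeomMedian θ θtilde)
    (hdev : Cconst α * ε < ‖θtilde - θstar‖) :
    (α - γ) * k ≤ ((J.filter fun j => ε < ‖θ j - θstar‖).card : ℝ) :=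
  geomMedian_deviation_forces_many_deviations_general θ θstar ε hε α hα γ J hJcard θtilde hmed hdev
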